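/- arXiv:2312.10526 — 3 statements merged into one kernel-verified Lean document; each statement's English description precedes it below -/
import Mathlib

section
/- Let C₀, C₁, C₂ be real numbers with |C₂| < 1, and let (Qₙ) be a sequence in [0,1] converging to some limit Q∞ ∈ [0,1]. Define the sequence (xₙ) by x₀ = C₀ + C₁ and x_{n+1} = C₀ + C₁ Qₙ + C₂ (1 - Qₙ) xₙ. Then (xₙ) converges, and its limit x∞ satisfies x∞ = (C₀ + C₁ Q∞) / (1 - C₂ (1 - Q∞)). -/
/-!
Writing `L` for the claimed limit, the error `uₙ = xₙ - L` satisfies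
`uₙ₊₁ = aₙ uₙ + (aₙ L + bₙ - L)` with `aₙ = C₂ (1 - Qₙ)` and `bₙ = C₀ + C₁ Qₙ`. The forcing term
tends to `a∞ L + b∞ - L = 0`, and eventually `|aₙ| ≤ r` for some `r < 1` because
`|a∞| = |C₂| (1 - Q∞) < 1`. A contraction perturbed by a null sequence drives the error to `0`.
-/

open Filter Topology

theorem tendsto_zero_of_le_mul_add {v c : ℕ → ℝ} {r : ℝ} (hr₀ : 0 ≤ r) (hr₁ : r < 1)
    (hv : ∀ n, 0 ≤ v n) (hc : Tendsto c atTop (𝓝 0))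
    (h : ∀ᶠ n in atTop, v (n + 1) ≤ r * v n + c n) :
    Tendsto v atTop (𝓝 0) := by
  refine tendsto_order.2 ⟨fun a ha => .of_forall fun n => ha.trans_le (hv n), fun ε hε => ?_⟩
  have hslack : 0 < (1 - r) * (ε / 2) := by nlinarith
  obtain ⟨N, hN⟩ := eventually_atTop.1 (h.and (hc.eventually (gt_mem_nhds hslack)))
  -- `ε / 2` is a fixed point of `t ↦ r t + (1 - r) ε / 2`, so the excess over it decays like `rⁿ`.
  have hbound : ∀ n ≥ N, v n ≤ r ^ (n - N) * v N + ε / 2 := by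
    intro n hn
    induction n, hn using Nat.le_induction with
    | base => simpa using (half_pos hε).le
    | succ n hn ih =>
      obtain ⟨hrec, hcn⟩ := hN n hn
      rw [Nat.sub_add_comm hn, pow_succ]
      nlinarith
  have hgeom : Tendsto (fun n => r ^ (n - N) * v N + ε / 2) atTop (𝓝 (0 * v N + ε / 2)) :=
    (((tendsto_pow_atTop_nhds_zero_of_lt_one hr₀ hr₁).comp (tendsto_sub_atTop_nat N)).mul_const
      _).add_const _
  rw [zero_mul, zero_add] at hgeom
  filter_upwards [eventually_ge_atTop N, hgeom.eventually (gt_mem_nhds (half_lt_self hε))]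
    with n hn hlt using (hbound n hn).trans_lt hlt

theorem tendsto_inv_one_sub_smul_of_forall_eq_smul_add {𝕜 E : Type*} [NormedField 𝕜] [NormedAddCommGroup E]
    [NormedSpace 𝕜 E] {a : ℕ → 𝕜} {b x : ℕ → E} {α : 𝕜} {β : E}
    (ha : Tendsto a atTop (𝓝 α)) (hα : ‖α‖ < 1) (hb : Tendsto b atTop (𝓝 β))
    (hx : ∀ n, x (n + 1) = a n • x n + b n) :
    Tendsto x atTop (𝓝 ((1 - α)⁻¹ • β)) := by
  set L := (1 - α)⁻¹ • β
  have hfix : α • L + β = L := by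
    have h1α : 1 - α ≠ 0 := sub_ne_zero.2 fun h => by simp [← h] at hα
    have hβ : (1 - α) • L = β := smul_inv_smul₀ h1α β
    rw [← hβ, sub_smul, one_smul]
    abel
  obtain ⟨r, hαr, hr₁⟩ := exists_between hα
  have hnorm_a : ∀ᶠ n in atTop, ‖a n‖ ≤ r := ha.norm.eventually (ge_mem_nhds hαr)
  have hforcing : Tendsto (fun n => ‖a n • L + b n - L‖) atTop (𝓝 0) := by
    simpa [hfix] using (((ha.smul_const L).add hb).sub_const L).norm
  have herror : Tendsto (fun n => ‖x n - L‖) atTop (𝓝 0) := by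
    refine tendsto_zero_of_le_mul_add ((norm_nonneg α).trans hαr.le) hr₁
      (fun n => norm_nonneg _) hforcing ?_
    filter_upwards [hnorm_a] with n hn
    calc ‖x (n + 1) - L‖ = ‖a n • (x n - L) + (a n • L + b n - L)‖ := by
          rw [hx, smul_sub]; abel_nf
      _ ≤ ‖a n‖ * ‖x n - L‖ + ‖a n • L + b n - L‖ := by
          grw [norm_add_le, norm_smul]
      _ ≤ r * ‖x n - L‖ + ‖a n • L + b n - L‖ := by gcongr
  exact tendsto_iff_norm_sub_tendsto_zero.2 herror

theorem stmt_0_general (C₀ C₁ C₂ : ℝ) (hC₂ : |C₂| < 1)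
    (Q : ℕ → ℝ)
    (Qinf : ℝ) (hQinf : Qinf ∈ Set.Icc (0:ℝ) 1)
    (hQconv : Tendsto Q atTop (nhds Qinf))
    (x : ℕ → ℝ)
    (hxrec : ∀ n, x (n + 1) = C₀ + C₁ * Q n + C₂ * (1 - Q n) * x n) :
    Tendsto x atTop (nhds ((C₀ + C₁ * Qinf) / (1 - C₂ * (1 - Qinf)))) := by
  have hcontr : ‖C₂ * (1 - Qinf)‖ < 1 := by
    rw [Real.norm_eq_abs, abs_mul, abs_of_nonneg (sub_nonneg.2 hQinf.2)]
    nlinarith [abs_nonneg C₂, hQinf.1]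
  rw [div_eq_inv_mul]
  exact tendsto_inv_one_sub_smul_of_forall_eq_smul_add (((tendsto_const_nhds.sub hQconv).const_mul C₂))
    hcontr (tendsto_const_nhds.add (hQconv.const_mul C₁)) fun n => by
      rw [hxrec, smul_eq_mul, add_comm]

theorem stmt_0 (C₀ C₁ C₂ : ℝ) (hC₂ : |C₂| < 1)
    (Q : ℕ → ℝ) (hQ : ∀ n, Q n ∈ Set.Icc (0:ℝ) 1)
    (Qinf : ℝ) (hQinf : Qinf ∈ Set.Icc (0:ℝ) 1)
    (hQconv : Tendsto Q atTop (nhds Qinf))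
    (x : ℕ → ℝ) (hx0 : x 0 = C₀ + C₁)
    (hxrec : ∀ n, x (n + 1) = C₀ + C₁ * Q n + C₂ * (1 - Q n) * x n) :
    Tendsto x atTop (nhds ((C₀ + C₁ * Qinf) / (1 - C₂ * (1 - Qinf)))) :=
  stmt_0_general C₀ C₁ C₂ hC₂ Q Qinf hQinf hQconv x hxrec
end

section
/- Fix T > 0, q ∈ ℝ and x₀ ∈ ℝ. Consider the ODE system on [0,T]: η̇ₜ = ηₜ² - 1 with terminal condition η_T = (1-q)², and Ẋ̄ₜ = -ηₜ X̄ₜ with X̄₀ = x₀. Then the terminal value satisfies X̄_T = 2x₀ / (e^T (1 + (1-q)²) + e^{-T} (1 - (1-q)²)), provided the denominator is nonzero. -/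
/-!
The Riccati equation `η' = η² - 1` is linearised by `η = -φ'/φ` with `φ'' = φ`. Take
`φ t = cosh (T - t) + (1-q)² sinh (T - t)`, so that `φ(T) = 1` and `φ'(T) = -(1-q)²`. Then
`ψ = ηφ + φ'` solves the linear equation `ψ' = ηψ` and vanishes at `T`, hence on `[0, T]`,
i.e. `φ' = -ηφ`. So `φ` solves the same linear equation as `X̄`; it cannot vanish at `0` since
`φ(T) = 1`, and uniqueness gives `X̄ = (x₀ / φ 0) φ`. Finally
`2 φ 0 = eᵀ(1 + (1-q)²) + e⁻ᵀ(1 - (1-q)²)`.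
-/

open Set Real NNReal

section LinearODE

variable {a y : ℝ → ℝ} {t₀ t₁ : ℝ}

theorem exists_lipschitzWith_mul (ha : ContinuousOn a (Icc t₀ t₁)) :
    ∃ K : ℝ≥0, ∀ t ∈ Icc t₀ t₁, LipschitzWith K (a t * ·) := by
  obtain ⟨C, hC⟩ := isCompact_Icc.exists_bound_of_continuousOn ha
  refine ⟨C.toNNReal, fun t ht => (lipschitzWith_smul (a t)).weaken ?_⟩
  rw [← NNReal.coe_le_coe, coe_nnnorm]
  exact (hC t ht).trans (le_coe_toNNReal C)

theorem eqOn_zero_of_hasDerivAt_mul_of_left (ha : ContinuousOn a (Icc t₀ t₁))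
    (hy : ∀ t ∈ Icc t₀ t₁, HasDerivAt y (a t * y t) t) (h₀ : y t₀ = 0) :
    EqOn y 0 (Icc t₀ t₁) := by
  obtain ⟨K, hK⟩ := exists_lipschitzWith_mul ha
  refine ODE_solution_unique_of_mem_Icc_right (v := fun t x => a t * x) (s := fun _ => univ)
    (fun t ht => (hK t (Ico_subset_Icc_self ht)).lipschitzOnWith) (HasDerivAt.continuousOn hy)
    (fun t ht => (hy t (Ico_subset_Icc_self ht)).hasDerivWithinAt) (fun _ _ => mem_univ _)
    continuousOn_const (fun t _ => ?_) (fun _ _ => mem_univ _) h₀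
  exact (hasDerivWithinAt_const t (Ici t) (0 : ℝ)).congr_deriv (mul_zero _).symm

theorem eqOn_zero_of_hasDerivAt_mul_of_right (ha : ContinuousOn a (Icc t₀ t₁))
    (hy : ∀ t ∈ Icc t₀ t₁, HasDerivAt y (a t * y t) t) (h₁ : y t₁ = 0) :
    EqOn y 0 (Icc t₀ t₁) := by
  obtain ⟨K, hK⟩ := exists_lipschitzWith_mul ha
  refine ODE_solution_unique_of_mem_Icc_left (v := fun t x => a t * x) (s := fun _ => univ)
    (fun t ht => (hK t (Ioc_subset_Icc_self ht)).lipschitzOnWith) (HasDerivAt.continuousOn hy)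
    (fun t ht => (hy t (Ioc_subset_Icc_self ht)).hasDerivWithinAt) (fun _ _ => mem_univ _)
    continuousOn_const (fun t _ => ?_) (fun _ _ => mem_univ _) h₁
  exact (hasDerivWithinAt_const t (Iic t) (0 : ℝ)).congr_deriv (mul_zero _).symm

end LinearODE

section Riccati

variable {η φ φ' : ℝ → ℝ} {t₀ t₁ : ℝ}

theorem hasDerivAt_riccati_mul_add {t : ℝ} (hη : HasDerivAt η (η t ^ 2 - 1) t)
    (hφ : HasDerivAt φ (φ' t) t) (hφ' : HasDerivAt φ' (φ t) t) :
    HasDerivAt (fun s => η s * φ s + φ' s) (η t * (η t * φ t + φ' t)) t :=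
  ((hη.mul hφ).add hφ').congr_deriv (by ring)

theorem hasDerivAt_neg_mul_of_riccati
    (hη : ∀ t ∈ Icc t₀ t₁, HasDerivAt η (η t ^ 2 - 1) t)
    (hφ : ∀ t, HasDerivAt φ (φ' t) t) (hφ' : ∀ t, HasDerivAt φ' (φ t) t)
    (h₁ : η t₁ * φ t₁ + φ' t₁ = 0) :
    ∀ t ∈ Icc t₀ t₁, HasDerivAt φ (-(η t * φ t)) t := by
  have hψ := eqOn_zero_of_hasDerivAt_mul_of_right (HasDerivAt.continuousOn hη)
    (fun t ht => hasDerivAt_riccati_mul_add (hη t ht) (hφ t) (hφ' t)) h₁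
  intro t ht
  have h : η t * φ t + φ' t = 0 := hψ ht
  exact (hφ t).congr_deriv (by linarith)

end Riccati

namespace LQRiccati

variable (T c : ℝ)

noncomputable def phi (t : ℝ) : ℝ := cosh (T - t) + c * sinh (T - t)

noncomputable def phi' (t : ℝ) : ℝ := -(sinh (T - t) + c * cosh (T - t))

theorem hasDerivAt_phi (t : ℝ) : HasDerivAt (phi T c) (phi' T c t) t := by
  have hs := (hasDerivAt_id' t).const_sub T
  exact (hs.cosh.add (hs.sinh.const_mul c)).congr_deriv (by simp only [phi']; ring)

theorem hasDerivAt_phi' (t : ℝ) : HasDerivAt (phi' T c) (phi T c t) t := by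
  have hs := (hasDerivAt_id' t).const_sub T
  exact (hs.sinh.add (hs.cosh.const_mul c)).neg.congr_deriv (by simp only [phi]; ring)

theorem phi_self : phi T c T = 1 := by simp [phi]

theorem phi'_self : phi' T c T = -c := by simp [phi']

theorem two_mul_phi_zero : 2 * phi T c 0 = exp T * (1 + c) + exp (-T) * (1 - c) := by
  simp only [phi, sub_zero, cosh_eq, sinh_eq]
  ring

end LQRiccati

open LQRiccati in
theorem stmt_3_general (T q x₀ : ℝ) (hT : 0 < T)
    (η X : ℝ → ℝ)
    (hη : ∀ t ∈ Set.Icc (0:ℝ) T, HasDerivAt η (η t ^ 2 - 1) t)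
    (hηT : η T = (1 - q) ^ 2)
    (hX : ∀ t ∈ Set.Icc (0:ℝ) T, HasDerivAt X (-(η t * X t)) t)
    (hX0 : X 0 = x₀) :
    X T = 2 * x₀ /
      (Real.exp T * (1 + (1 - q) ^ 2) + Real.exp (-T) * (1 - (1 - q) ^ 2)) := by
  generalize (1 - q) ^ 2 = c at hηT ⊢
  have hφ := hasDerivAt_neg_mul_of_riccati hη (hasDerivAt_phi T c) (hasDerivAt_phi' T c)
    (by rw [phi_self, phi'_self, hηT]; ring)
  have hnegη : ContinuousOn (fun t => -η t) (Icc 0 T) := (HasDerivAt.continuousOn hη).neg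
  have hT' : T ∈ Icc 0 T := ⟨hT.le, le_rfl⟩
  have hφ0 : phi T c 0 ≠ 0 := fun h0 => by
    have := eqOn_zero_of_hasDerivAt_mul_of_left hnegη
      (fun t ht => (hφ t ht).congr_deriv (neg_mul _ _).symm) h0 hT'
    exact one_ne_zero ((phi_self T c).symm.trans this)
  have hXφ : phi T c 0 * X T - x₀ * phi T c T = 0 :=
    eqOn_zero_of_hasDerivAt_mul_of_left (y := fun t => phi T c 0 * X t - x₀ * phi T c t) hnegη
      (fun t ht => (((hX t ht).const_mul _).sub ((hφ t ht).const_mul _)).congr_deriv (by ring))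
      (by rw [hX0]; ring) hT'
  rw [← two_mul_phi_zero, eq_div_iff (mul_ne_zero two_ne_zero hφ0)]
  rw [phi_self] at hXφ
  linarith

theorem stmt_3 (T q x₀ : ℝ) (hT : 0 < T)
    (η X : ℝ → ℝ)
    (hη : ∀ t ∈ Set.Icc (0:ℝ) T, HasDerivAt η (η t ^ 2 - 1) t)
    (hηT : η T = (1 - q) ^ 2)
    (hX : ∀ t ∈ Set.Icc (0:ℝ) T, HasDerivAt X (-(η t * X t)) t)
    (hX0 : X 0 = x₀)
    (hden : Real.exp T * (1 + (1 - q) ^ 2) + Real.exp (-T) * (1 - (1 - q) ^ 2) ≠ 0) :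
    X T = 2 * x₀ /
      (Real.exp T * (1 + (1 - q) ^ 2) + Real.exp (-T) * (1 - (1 - q) ^ 2)) :=
  stmt_3_general T q x₀ hT η X hη hηT hX hX0
end

section
/- Let A be a set of controls, M a convex subset of a real vector space, and Φ : A → M. Let J(α; μ) = K(α) + F(α; μ) where F(α; ·) : M → ℝ is concave for every α. Fix p ∈ [0,1] and a reference point m ∈ M. Suppose α* minimizes β ↦ J(β; m) over A, with minimal value Ĵ₀, suppose α^p minimizes β ↦ J(β; p Φ(β-population) + (1-p) m) in the equilibrium sense (i.e., α^p minimizes β ↦ J(β; p Φ(α^p) + (1-p) m)), with value Ĵ_p, and suppose J* ≤ K(α^p) + F(α^p; Φ(α^p)) where J* is the social optimum value inf_β (K(β) + F(β; Φ(β))). Then Ĵ_p ≥ p J* + (1-p) Ĵ₀ ≥ Ĵ₀ (using J* ≥ Ĵ₀). -/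
/-! Since `J(α^p; ·)` is concave, the deviators' cost at the mixture `p Φ(α^p) + (1-p) m` dominates
`p J(α^p; Φ(α^p)) + (1-p) J(α^p; m)`; the first term is at least `J*` by optimality of the social
planner and the second at least `Ĵ₀` by optimality of `α*`. -/

theorem ConcaveOn.mul_add_mul_le_of_le {V : Type*} [AddCommGroup V] [Module ℝ V]
    {s : Set V} {f : V → ℝ} (hf : ConcaveOn ℝ s f) {x y : V} (hx : x ∈ s) (hy : y ∈ s)
    {p a b : ℝ} (hp : p ∈ Set.Icc (0 : ℝ) 1) (ha : a ≤ f x) (hb : b ≤ f y) :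
    p * a + (1 - p) * b ≤ f (p • x + (1 - p) • y) :=
  calc p * a + (1 - p) * b ≤ p * f x + (1 - p) * f y := by
        gcongr
        · exact hp.1
        · linarith [hp.2]
    _ ≤ f (p • x + (1 - p) • y) := hf.2 hx hy hp.1 (by linarith [hp.2]) (by ring)

theorem stmt_9_general {A V : Type*} [AddCommGroup V] [Module ℝ V]
    (Mset : Set V)
    (Φ : A → V) (hΦ : ∀ β, Φ β ∈ Mset)
    (K : A → ℝ) (F : A → V → ℝ)
    (hF : ∀ α, ConcaveOn ℝ Mset (F α))
    (p : ℝ) (hp : p ∈ Set.Icc (0:ℝ) 1)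
    (m : V) (hm : m ∈ Mset)
    (αp : A) (J0 Jp Jstar : ℝ)
    (hαstar : ∀ β, J0 ≤ K β + F β m)
    (hJp : Jp = K αp + F αp (p • Φ αp + (1 - p) • m))
    (hJstarle : Jstar ≤ K αp + F αp (Φ αp))
    (hJstarge : J0 ≤ Jstar) :
    p * Jstar + (1 - p) * J0 ≤ Jp ∧ J0 ≤ p * Jstar + (1 - p) * J0 := by
  have hcost : ConcaveOn ℝ Mset (fun μ => K αp + F αp μ) :=
    (concaveOn_const (K αp) (hF αp).1).add (hF αp)
  refine ⟨hJp ▸ hcost.mul_add_mul_le_of_le (hΦ αp) hm hp hJstarle (hαstar αp), ?_⟩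
  nlinarith [mul_le_mul_of_nonneg_left hJstarge hp.1]

theorem stmt_9 {A V : Type*} [AddCommGroup V] [Module ℝ V]
    (Mset : Set V) (hM : Convex ℝ Mset)
    (Φ : A → V) (hΦ : ∀ β, Φ β ∈ Mset)
    (K : A → ℝ) (F : A → V → ℝ)
    (hF : ∀ α, ConcaveOn ℝ Mset (F α))
    (p : ℝ) (hp : p ∈ Set.Icc (0:ℝ) 1)
    (m : V) (hm : m ∈ Mset)
    (αstar αp : A) (J0 Jp Jstar : ℝ)
    (hJ0 : J0 = K αstar + F αstar m)
    (hαstar : ∀ β, J0 ≤ K β + F β m)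
    (hJp : Jp = K αp + F αp (p • Φ αp + (1 - p) • m))
    (hαp : ∀ β, Jp ≤ K β + F β (p • Φ αp + (1 - p) • m))
    (hJstarle : Jstar ≤ K αp + F αp (Φ αp))
    (hJstarge : J0 ≤ Jstar) :
    p * Jstar + (1 - p) * J0 ≤ Jp ∧ J0 ≤ p * Jstar + (1 - p) * J0 :=
  stmt_9_general Mset Φ hΦ K F hF p hp m hm αp J0 Jp Jstar hαstar hJp hJstarle hJstarge
end
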